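/- arXiv:2406.16617 — 4 statements merged into one kernel-verified Lean document; each statement's English description precedes it below -/
import Mathlib

section
/- Let k > 0 and let α : [0,1] → ℝ be continuous with ∫_0^1 α(y) dy = 0. Suppose ψ : [0,1] → ℝ is twice continuously differentiable with ψ(y) > 0 for all y ∈ [0,1], ψ''(y) + (k α(y) + λ)ψ(y) = 0 for all y ∈ (0,1), and ψ'(0) = ψ'(1) = 0. Then λ = −∫_0^1 (ψ'(y)/ψ(y))² dy. In particular λ ≤ 0, and if α is not identically zero then λ < 0. -/
/-!
The logarithmic derivative `g = ψ'/ψ` of the positive eigenfunction solves the Riccati equation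
`g' = -(kα + λ) - g²`. Integrating over `[0,1]`, the Neumann conditions kill `∫ g'` and the zero
mean of `α` kills `∫ kα`, leaving `λ = -∫ g²`. If `λ = 0`, then `g ≡ 0` by continuity, and the
Riccati equation collapses to `kα ≡ 0`.
-/

open Set MeasureTheory

section Riccati

variable {ψ ψ' ψ'' q : ℝ → ℝ}

theorem hasDerivAt_div_of_ode {y : ℝ} (hψ : HasDerivAt ψ (ψ' y) y)
    (hψ' : HasDerivAt ψ' (ψ'' y) y) (hne : ψ y ≠ 0) (hode : ψ'' y + q y * ψ y = 0) :
    HasDerivAt (fun x => ψ' x / ψ x) (-q y - (ψ' y / ψ y) ^ 2) y := by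
  refine (hψ'.div hψ hne).congr_deriv ?_
  rw [eq_neg_of_add_eq_zero_left hode]
  field_simp

variable {a b : ℝ}
  (hψ' : ∀ y ∈ Icc a b, HasDerivWithinAt ψ (ψ' y) (Icc a b) y)
  (hψ'' : ∀ y ∈ Icc a b, HasDerivWithinAt ψ' (ψ'' y) (Icc a b) y)
  (hne : ∀ y ∈ Icc a b, ψ y ≠ 0)
  (hode : ∀ y ∈ Ioo a b, ψ'' y + q y * ψ y = 0)
include hψ' hψ'' hne

theorem continuousOn_div_of_hasDerivWithinAt :
    ContinuousOn (fun y => ψ' y / ψ y) (Icc a b) :=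
  ContinuousOn.div (fun y hy => (hψ'' y hy).continuousWithinAt)
    (fun y hy => (hψ' y hy).continuousWithinAt) hne

include hode

theorem hasDerivAt_div_of_ode_of_mem_Ioo {y : ℝ} (hy : y ∈ Ioo a b) :
    HasDerivAt (fun x => ψ' x / ψ x) (-q y - (ψ' y / ψ y) ^ 2) y :=
  have hnhds : Icc a b ∈ nhds y := Icc_mem_nhds hy.1 hy.2
  hasDerivAt_div_of_ode ((hψ' y (Ioo_subset_Icc_self hy)).hasDerivAt hnhds)
    ((hψ'' y (Ioo_subset_Icc_self hy)).hasDerivAt hnhds) (hne y (Ioo_subset_Icc_self hy))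
    (hode y hy)

theorem integral_eq_neg_integral_sq_div_of_neumann (hab : a ≤ b) (hq : ContinuousOn q (Icc a b))
    (ha : ψ' a = 0) (hb : ψ' b = 0) :
    ∫ y in a..b, q y = -∫ y in a..b, (ψ' y / ψ y) ^ 2 := by
  have hg := continuousOn_div_of_hasDerivWithinAt hψ' hψ'' hne
  have hq_int : IntervalIntegrable (fun y => -q y) volume a b :=
    (hq.intervalIntegrable_of_Icc hab).neg
  have hg_int : IntervalIntegrable (fun y => (ψ' y / ψ y) ^ 2) volume a b :=
    (hg.pow 2).intervalIntegrable_of_Icc hab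
  have hftc : ∫ y in a..b, (-q y - (ψ' y / ψ y) ^ 2) = ψ' b / ψ b - ψ' a / ψ a :=
    intervalIntegral.integral_eq_sub_of_hasDerivAt_of_le hab hg
      (fun y hy => hasDerivAt_div_of_ode_of_mem_Ioo hψ' hψ'' hne hode hy) (hq_int.sub hg_int)
  rw [ha, hb, zero_div, zero_div, sub_zero, intervalIntegral.integral_sub hq_int hg_int,
    intervalIntegral.integral_neg] at hftc
  linarith

theorem eqOn_zero_of_integral_sq_div_eq_zero (hab : a < b) (hq : ContinuousOn q (Icc a b))
    (h : ∫ y in a..b, (ψ' y / ψ y) ^ 2 = 0) : EqOn q 0 (Icc a b) := by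
  have hg := continuousOn_div_of_hasDerivWithinAt hψ' hψ'' hne
  have hg0 : ∀ y ∈ Icc a b, ψ' y / ψ y = 0 := by
    by_contra! ⟨c, hc, hgc⟩
    exact h.not_gt <| intervalIntegral.integral_pos hab (hg.pow 2)
      (fun y _ => sq_nonneg _) ⟨c, hc, by positivity⟩
  have hq0 : EqOn q 0 (Ioo a b) := fun y hy => by
    have hlocal : (fun x => ψ' x / ψ x) =ᶠ[nhds y] fun _ => 0 :=
      Filter.eventually_of_mem (Icc_mem_nhds hy.1 hy.2) hg0
    have := (hasDerivAt_div_of_ode_of_mem_Ioo hψ' hψ'' hne hode hy).unique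
      ((hasDerivAt_const y (0 : ℝ)).congr_of_eventuallyEq hlocal)
    rw [hg0 y (Ioo_subset_Icc_self hy)] at this
    simpa using this
  exact hq0.of_subset_closure hq continuousOn_const Ioo_subset_Icc_self
    (closure_Ioo hab.ne).ge

end Riccati

theorem stmt_2_general (k lam : ℝ) (hk : 0 < k) (α ψ ψ' ψ'' : ℝ → ℝ)
    (hαcont : ContinuousOn α (Icc 0 1))
    (hαmean : (∫ y in (0:ℝ)..1, α y) = 0)
    (hψ' : ∀ y ∈ Icc (0:ℝ) 1, HasDerivWithinAt ψ (ψ' y) (Icc 0 1) y)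
    (hψ'' : ∀ y ∈ Icc (0:ℝ) 1, HasDerivWithinAt ψ' (ψ'' y) (Icc 0 1) y)
    (hψpos : ∀ y ∈ Icc (0:ℝ) 1, 0 < ψ y)
    (hode : ∀ y ∈ Ioo (0:ℝ) 1, ψ'' y + (k * α y + lam) * ψ y = 0)
    (hbc0 : ψ' 0 = 0) (hbc1 : ψ' 1 = 0) :
    lam = -∫ y in (0:ℝ)..1, (ψ' y / ψ y)^2 ∧
    lam ≤ 0 ∧
    ((∃ y ∈ Icc (0:ℝ) 1, α y ≠ 0) → lam < 0) := by
  have hne : ∀ y ∈ Icc (0:ℝ) 1, ψ y ≠ 0 := fun y hy => (hψpos y hy).ne'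
  have hq : ContinuousOn (fun y => k * α y + lam) (Icc 0 1) :=
    (continuousOn_const.mul hαcont).add continuousOn_const
  have hmean : ∫ y in (0:ℝ)..1, (k * α y + lam) = lam := by
    rw [intervalIntegral.integral_add ((hαcont.intervalIntegrable_of_Icc zero_le_one).const_mul k)
      intervalIntegrable_const, intervalIntegral.integral_const_mul, hαmean]
    simp
  have hlam : lam = -∫ y in (0:ℝ)..1, (ψ' y / ψ y) ^ 2 := hmean ▸
    integral_eq_neg_integral_sq_div_of_neumann hψ' hψ'' hne hode zero_le_one hq hbc0 hbc1
  have hsq : 0 ≤ ∫ y in (0:ℝ)..1, (ψ' y / ψ y) ^ 2 :=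
    intervalIntegral.integral_nonneg zero_le_one fun y _ => sq_nonneg _
  refine ⟨hlam, by linarith, fun ⟨y₀, hy₀, hαy₀⟩ => ?_⟩
  by_contra! hlam_nonneg
  have hq0 := eqOn_zero_of_integral_sq_div_eq_zero hψ' hψ'' hne hode zero_lt_one hq
    (by linarith) hy₀
  have : k * α y₀ = 0 := by simp only [Pi.zero_apply] at hq0; linarith
  exact hαy₀ ((mul_eq_zero.mp this).resolve_left hk.ne')

/-- Variational identity for the eigenvalue of the Sturm–Liouville problem
`ψ'' + (kα(y) + λ)ψ = 0` on `(0,1)` with Neumann boundary conditions and positive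
eigenfunction `ψ`: `λ = −∫_0^1 (ψ'/ψ)² dy`, hence `λ ≤ 0`, with strict inequality
when `α` is not identically zero on `[0,1]`. -/
theorem stmt_2 (k lam : ℝ) (hk : 0 < k) (α ψ ψ' ψ'' : ℝ → ℝ)
    (hαcont : ContinuousOn α (Icc 0 1))
    (hαmean : (∫ y in (0:ℝ)..1, α y) = 0)
    (hψ' : ∀ y ∈ Icc (0:ℝ) 1, HasDerivWithinAt ψ (ψ' y) (Icc 0 1) y)
    (hψ'' : ∀ y ∈ Icc (0:ℝ) 1, HasDerivWithinAt ψ' (ψ'' y) (Icc 0 1) y)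
    (hψ''cont : ContinuousOn ψ'' (Icc 0 1))
    (hψpos : ∀ y ∈ Icc (0:ℝ) 1, 0 < ψ y)
    (hode : ∀ y ∈ Ioo (0:ℝ) 1, ψ'' y + (k * α y + lam) * ψ y = 0)
    (hbc0 : ψ' 0 = 0) (hbc1 : ψ' 1 = 0) :
    lam = -∫ y in (0:ℝ)..1, (ψ' y / ψ y)^2 ∧
    lam ≤ 0 ∧
    ((∃ y ∈ Icc (0:ℝ) 1, α y ≠ 0) → lam < 0) :=
  stmt_2_general k lam hk α ψ ψ' ψ'' hαcont hαmean hψ' hψ'' hψpos hode hbc0 hbc1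
end

section
/- Let v > 0, u_c ∈ (0,1), and let f : ℝ → ℝ be continuously differentiable. Suppose U : ℝ → ℝ is continuously differentiable on ℝ and twice continuously differentiable on ℝ∖{0}, satisfies U''(ξ) + v·U'(ξ) + f(U(ξ)) = 0 for all ξ < 0, U(ξ) = u_c·e^{−vξ} for all ξ ≥ 0, and U'' has finite one-sided limits at 0. Let μ > 0 and β ∈ ℝ, and set a(ξ) = −(β/μ)·U'(ξ). Then: (i) a''(ξ) + v·a'(ξ) − (μ − 1_{ξ<0}·f'(U(ξ)))·a(ξ) = β·U'(ξ) for all ξ ∈ ℝ∖{0}; (ii) a is continuous at 0 with a(0) = (β/μ)·v·u_c; (iii) the one-sided limits of a' at 0 satisfy a'(0⁺) − a'(0⁻) = −f(u_c)·(v·u_c)^{−1}·a(0); (iv) if U'(ξ) → 0 as ξ → −∞, then a(ξ) → 0 as |ξ| → ∞. -/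
/-!
Differentiating the travelling-wave equation shows that `U'` solves the linearised equation
`w'' + v w' + 1_{ξ<0} f'(U) w = 0` on both sides of the interface (ahead of it `U'` is a
multiple of `e^{-vξ}`), so `a = c U'` gives `a'' + v a' - (μ - 1_{ξ<0} f'(U)) a = -μ c U'`,
which is `β U'` for `c = -β/μ`. The jump of `a'` at `0` is `c` times that of `U''`: the
equation with `U(0) = u_c`, `U'(0) = -v u_c` gives `U''(0⁻) = v² u_c - f(u_c)`, while
`U''(0⁺) = v² u_c`.
-/

open Set Filter Topology Real

theorem Set.EqOn.tendsto_nhdsWithin {α β : Type*} [TopologicalSpace α] [TopologicalSpace β]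
    {g h : α → β} {s : Set α} {x : α} (heq : EqOn g h s) (hh : ContinuousAt h x) :
    Tendsto g (𝓝[s] x) (𝓝 (h x)) :=
  (hh.tendsto.mono_left nhdsWithin_le_nhds).congr' heq.eventuallyEq_nhdsWithin.symm

theorem hasDerivAt_const_mul_exp_neg_mul (k v ξ : ℝ) :
    HasDerivAt (fun x => k * exp (-v * x)) (-v * k * exp (-v * ξ)) ξ :=
  ((((hasDerivAt_id' ξ).const_mul (-v)).exp).const_mul k).congr_deriv (by ring)

theorem hasDerivAt_of_eqOn_const_mul_exp {g : ℝ → ℝ} {s : Set ℝ} {k v ξ : ℝ} (hs : IsOpen s)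
    (hg : EqOn g (fun x => k * exp (-v * x)) s) (hξ : ξ ∈ s) :
    HasDerivAt g (-v * k * exp (-v * ξ)) ξ :=
  (hasDerivAt_const_mul_exp_neg_mul k v ξ).congr_of_eventuallyEq
    (hg.eventuallyEq_of_mem (hs.mem_nhds hξ))

theorem hasDerivAt_of_secondOrder_ode {f U U' U'' : ℝ → ℝ} {v ξ : ℝ}
    (hf : DifferentiableAt ℝ f (U ξ)) (hU : HasDerivAt U (U' ξ) ξ)
    (hU' : HasDerivAt U' (U'' ξ) ξ) (hode : ∀ᶠ x in 𝓝 ξ, U'' x + v * U' x + f (U x) = 0) :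
    HasDerivAt U'' (-(v * U'' ξ + deriv f (U ξ) * U' ξ)) ξ := by
  have h : HasDerivAt (fun x => -(v * U' x + f (U x))) (-(v * U'' ξ + deriv f (U ξ) * U' ξ)) ξ :=
    ((hU'.const_mul v).add (hf.hasDerivAt.comp ξ hU)).neg
  exact h.congr_of_eventuallyEq (hode.mono fun x hx => by linarith)

theorem exists_hasDerivAt_linearized {f U U' U'' : ℝ → ℝ} {v k ξ : ℝ}
    (hf : Differentiable ℝ f) (hU' : ∀ ξ, HasDerivAt U (U' ξ) ξ)
    (hU'' : ∀ ξ, ξ ≠ 0 → HasDerivAt U' (U'' ξ) ξ)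
    (hode : ∀ ξ < 0, U'' ξ + v * U' ξ + f (U ξ) = 0)
    (htail : EqOn U'' (fun x => k * exp (-v * x)) (Ioi 0)) (hξ : ξ ≠ 0) :
    ∃ w, HasDerivAt U'' w ξ ∧
      w + v * U'' ξ + (if ξ < 0 then deriv f (U ξ) else 0) * U' ξ = 0 := by
  rcases hξ.lt_or_gt with hξ | hξ
  · refine ⟨_, hasDerivAt_of_secondOrder_ode (hf _) (hU' ξ) (hU'' ξ hξ.ne)
      (eventually_of_mem (Iio_mem_nhds hξ) hode), ?_⟩
    rw [if_pos hξ]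
    ring
  · refine ⟨_, hasDerivAt_of_eqOn_const_mul_exp isOpen_Ioi htail hξ, ?_⟩
    rw [if_neg hξ.not_gt, htail hξ]
    ring

theorem hasDerivAt_deriv_const_mul {g g' : ℝ → ℝ} {g'' c ξ : ℝ}
    (hg : ∀ᶠ x in 𝓝 ξ, HasDerivAt g (g' x) x) (hg' : HasDerivAt g' g'' ξ) :
    HasDerivAt (deriv fun x => c * g x) (c * g'') ξ :=
  (hg'.const_mul c).congr_of_eventuallyEq (hg.mono fun _ hx => (hx.const_mul c).deriv)

theorem linearized_const_mul_eq {f U U' U'' : ℝ → ℝ} {v k c μ ξ : ℝ}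
    (hf : Differentiable ℝ f) (hU' : ∀ ξ, HasDerivAt U (U' ξ) ξ)
    (hU'' : ∀ ξ, ξ ≠ 0 → HasDerivAt U' (U'' ξ) ξ)
    (hode : ∀ ξ < 0, U'' ξ + v * U' ξ + f (U ξ) = 0)
    (htail : EqOn U'' (fun x => k * exp (-v * x)) (Ioi 0)) (hξ : ξ ≠ 0) :
    DifferentiableAt ℝ (fun x => c * U' x) ξ ∧
      DifferentiableAt ℝ (deriv fun x => c * U' x) ξ ∧
      deriv (deriv fun x => c * U' x) ξ + v * deriv (fun x => c * U' x) ξ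
        - (μ - (if ξ < 0 then deriv f (U ξ) else 0)) * (c * U' ξ) = -μ * c * U' ξ := by
  obtain ⟨w, hw, hlin⟩ := exists_hasDerivAt_linearized hf hU' hU'' hode htail hξ
  have hda := (hU'' ξ hξ).const_mul c
  have hdda := hasDerivAt_deriv_const_mul (c := c) ((eventually_ne_nhds hξ).mono hU'') hw
  refine ⟨hda.differentiableAt, hdda.differentiableAt, ?_⟩
  rw [hdda.deriv, hda.deriv]
  linear_combination c * hlin

theorem tendsto_deriv_const_mul_nhdsWithin {g g' : ℝ → ℝ} {s : Set ℝ} {x L c : ℝ}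
    (hg : ∀ y ∈ s, HasDerivAt g (g' y) y) (h : Tendsto g' (𝓝[s] x) (𝓝 L)) :
    Tendsto (deriv fun y => c * g y) (𝓝[s] x) (𝓝 (c * L)) :=
  (h.const_mul c).congr' <| eventually_nhdsWithin_of_forall fun y hy =>
    ((hg y hy).const_mul c).deriv.symm

theorem tendsto_nhdsLT_of_ode {f U U' U'' : ℝ → ℝ} {v x₀ : ℝ} (hf : Continuous f)
    (hU : Continuous U) (hU' : Continuous U')
    (hode : ∀ ξ < x₀, U'' ξ + v * U' ξ + f (U ξ) = 0) :
    Tendsto U'' (𝓝[<] x₀) (𝓝 (-(v * U' x₀ + f (U x₀)))) :=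
  EqOn.tendsto_nhdsWithin (h := fun x => -(v * U' x + f (U x)))
    (fun x hx => by linarith [hode x hx]) (by fun_prop)

theorem tendsto_const_mul_exp_neg_mul_atTop (k : ℝ) {v : ℝ} (hv : 0 < v) :
    Tendsto (fun x => k * exp (-v * x)) atTop (𝓝 0) := by
  simpa using (tendsto_exp_atBot.comp
    (tendsto_id.const_mul_atTop_of_neg (neg_lt_zero.mpr hv))).const_mul k

theorem stmt_12_general (v u_c μ β : ℝ) (hv : 0 < v) (huc : u_c ∈ Ioo (0:ℝ) 1) (hμ : 0 < μ)
    (f : ℝ → ℝ) (hf : ContDiff ℝ 1 f)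
    (U U' U'' : ℝ → ℝ)
    (hU' : ∀ ξ : ℝ, HasDerivAt U (U' ξ) ξ)
    (hU'c : Continuous U')
    (hU'' : ∀ ξ : ℝ, ξ ≠ 0 → HasDerivAt U' (U'' ξ) ξ)
    (hodeL : ∀ ξ : ℝ, ξ < 0 → U'' ξ + v * U' ξ + f (U ξ) = 0)
    (hR : ∀ ξ : ℝ, 0 ≤ ξ → U ξ = u_c * Real.exp (-v * ξ))
    (a : ℝ → ℝ) (ha : ∀ ξ : ℝ, a ξ = -(β/μ) * U' ξ) :
    -- (i)
    (∀ ξ : ℝ, ξ ≠ 0 →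
      DifferentiableAt ℝ a ξ ∧ DifferentiableAt ℝ (deriv a) ξ ∧
      deriv (deriv a) ξ + v * deriv a ξ
        - (μ - (if ξ < 0 then deriv f (U ξ) else 0)) * a ξ = β * U' ξ) ∧
    -- (ii)
    (ContinuousAt a 0 ∧ a 0 = (β/μ) * v * u_c) ∧
    -- (iii)
    (∀ l₁ l₂ : ℝ,
      Tendsto (deriv a) (nhdsWithin 0 (Iio 0)) (nhds l₁) →
      Tendsto (deriv a) (nhdsWithin 0 (Ioi 0)) (nhds l₂) →
      l₂ - l₁ = -f u_c * (v * u_c)⁻¹ * a 0) ∧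
    -- (iv)
    (Tendsto U' atBot (nhds 0) →
      Tendsto a atBot (nhds 0) ∧ Tendsto a atTop (nhds 0)) := by
  obtain rfl : a = fun ξ => -(β / μ) * U' ξ := funext ha
  have hU'tail : EqOn U' (fun x => -v * u_c * exp (-v * x)) (Ioi 0) := fun x hx =>
    (hU' x).unique (hasDerivAt_of_eqOn_const_mul_exp isOpen_Ioi (fun y hy => hR y hy.le) hx)
  have hU''tail : EqOn U'' (fun x => -v * (-v * u_c) * exp (-v * x)) (Ioi 0) := fun x hx =>
    (hU'' x hx.ne').unique (hasDerivAt_of_eqOn_const_mul_exp isOpen_Ioi hU'tail hx)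
  have hU'0 : U' 0 = -v * u_c := by
    simpa using tendsto_nhds_unique ((hU'c.tendsto 0).mono_left nhdsWithin_le_nhds)
      (hU'tail.tendsto_nhdsWithin (by fun_prop))
  have hU0 : U 0 = u_c := by simpa using hR 0 le_rfl
  refine ⟨fun ξ hξ => ?_, ⟨(continuous_const.mul hU'c).continuousAt, by simp [hU'0]; ring⟩,
    fun l₁ l₂ h₁ h₂ => ?_, fun hbot => ⟨by simpa using hbot.const_mul (-(β / μ)), ?_⟩⟩
  · obtain ⟨hda, hdda, heq⟩ := linearized_const_mul_eq (c := -(β / μ)) (μ := μ)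
      (hf.differentiable one_ne_zero) hU' hU'' hodeL hU''tail hξ
    exact ⟨hda, hdda, by rw [heq]; field_simp⟩
  · have hleft := tendsto_nhdsLT_of_ode hf.continuous
      (continuous_iff_continuousAt.mpr fun x => (hU' x).continuousAt) hU'c hodeL
    have hright := hU''tail.tendsto_nhdsWithin (x := 0) (by fun_prop)
    rw [tendsto_nhds_unique h₁ (tendsto_deriv_const_mul_nhdsWithin
        (fun y hy => hU'' y hy.ne) hleft),
      tendsto_nhds_unique h₂ (tendsto_deriv_const_mul_nhdsWithin
        (fun y hy => hU'' y hy.ne') hright)]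
    simp only [hU'0, hU0, mul_zero, exp_zero]
    field_simp [huc.1.ne']
    ring
  · refine (tendsto_const_mul_exp_neg_mul_atTop (-(β / μ) * (-v * u_c)) hv).congr' ?_
    filter_upwards [eventually_gt_atTop 0] with x hx
    rw [hU'tail hx]
    ring

/-- Verification that `a = −(β/μ)U'` solves the transverse-mode correction problem for
the cut-off KPP travelling wave `U` (speed `v`, cut-off `u_c`):
(i) `a'' + va' − (μ − 1_{ξ<0} f'(U))a = βU'` away from `0`;
(ii) `a` is continuous at `0` with `a(0) = (β/μ)vu_c`;
(iii) the one-sided limits of `a'` at `0` jump by `−f(u_c)(vu_c)⁻¹ a(0)`;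
(iv) if `U' → 0` at `−∞` then `a → 0` as `|ξ| → ∞`. -/
theorem stmt_12 (v u_c μ β : ℝ) (hv : 0 < v) (huc : u_c ∈ Ioo (0:ℝ) 1) (hμ : 0 < μ)
    (f : ℝ → ℝ) (hf : ContDiff ℝ 1 f)
    (U U' U'' : ℝ → ℝ)
    (hU' : ∀ ξ : ℝ, HasDerivAt U (U' ξ) ξ)
    (hU'c : Continuous U')
    (hU'' : ∀ ξ : ℝ, ξ ≠ 0 → HasDerivAt U' (U'' ξ) ξ)
    (hU''c : ContinuousOn U'' {(0:ℝ)}ᶜ)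
    (hodeL : ∀ ξ : ℝ, ξ < 0 → U'' ξ + v * U' ξ + f (U ξ) = 0)
    (hR : ∀ ξ : ℝ, 0 ≤ ξ → U ξ = u_c * Real.exp (-v * ξ))
    (hU''lim : ∃ l₁ l₂ : ℝ, Tendsto U'' (nhdsWithin 0 (Iio 0)) (nhds l₁) ∧
      Tendsto U'' (nhdsWithin 0 (Ioi 0)) (nhds l₂))
    (a : ℝ → ℝ) (ha : ∀ ξ : ℝ, a ξ = -(β/μ) * U' ξ) :
    -- (i)
    (∀ ξ : ℝ, ξ ≠ 0 →
      DifferentiableAt ℝ a ξ ∧ DifferentiableAt ℝ (deriv a) ξ ∧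
      deriv (deriv a) ξ + v * deriv a ξ
        - (μ - (if ξ < 0 then deriv f (U ξ) else 0)) * a ξ = β * U' ξ) ∧
    -- (ii)
    (ContinuousAt a 0 ∧ a 0 = (β/μ) * v * u_c) ∧
    -- (iii)
    (∀ l₁ l₂ : ℝ,
      Tendsto (deriv a) (nhdsWithin 0 (Iio 0)) (nhds l₁) →
      Tendsto (deriv a) (nhdsWithin 0 (Ioi 0)) (nhds l₂) →
      l₂ - l₁ = -f u_c * (v * u_c)⁻¹ * a 0) ∧
    -- (iv)
    (Tendsto U' atBot (nhds 0) →
      Tendsto a atBot (nhds 0) ∧ Tendsto a atTop (nhds 0)) :=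
  stmt_12_general v u_c μ β hv huc hμ f hf U U' U'' hU' hU'c hU'' hodeL hR a ha
end

section
/- Let v > 0, u_c ∈ (0,1), and let f : ℝ → ℝ be continuously differentiable. Suppose U : ℝ → ℝ is continuously differentiable on ℝ and twice continuously differentiable on ℝ∖{0}, satisfies U''(ξ) + v·U'(ξ) + f(U(ξ)) = 0 for all ξ < 0, U(ξ) = u_c·e^{−vξ} for all ξ ≥ 0, U'' has finite one-sided limits at 0, and ∫_{−∞}^0 (U'(s))²·e^{vs} ds is finite. Let v₁ ∈ ℝ and let a : ℝ → ℝ be continuous on ℝ, continuously differentiable on ℝ∖{0} with finite one-sided limits a'(0⁺), a'(0⁻), and twice continuously differentiable on ℝ∖{0}, satisfying: a''(ξ) + v·a'(ξ) + 1_{ξ<0}·f'(U(ξ))·a(ξ) = −v₁·U'(ξ) for all ξ ∈ ℝ∖{0}; a'(0⁺) − a'(0⁻) = −f(u_c)·(v·u_c)^{−1}·a(0); and e^{vξ}(a'(ξ)U'(ξ) − a(ξ)U''(ξ)) → 0 as ξ → +∞ and as ξ → −∞. Then v₁ = 0. -/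
open Set Filter MeasureTheory Topology

/-!
Let `W = e^{vξ}(a'U' - aU'')` be the weighted Wronskian of `a` with the translation mode `U'`.
The weight `e^{vξ}` makes `y'' + vy' + qy` self-adjoint, and `U'` solves the homogeneous
linearised equation on both sides of the interface, so `W' = -v₁ (U')² e^{vξ}` away from `0`.
Integrating over `(-∞, 0)` and `(0, ∞)`, where `W → 0` at `±∞`, gives
`-v₁ ∫ (U')² e^{vs} ds = W(0⁻) - W(0⁺)`; on `(0, ∞)` the integral is `v u_c²`.
The jump `W(0⁻) - W(0⁺) = (a'(0⁻) - a'(0⁺)) U'(0) - a(0) (U''(0⁻) - U''(0⁺))` vanishes,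
because `U'(0) = -v u_c`, the equation for `U` gives `U''(0⁻) - U''(0⁺) = -f(u_c)`, and the
interface condition on `a'` is exactly the one cancelling these. Hence
`v₁ (∫_{-∞}^0 (U')² e^{vs} ds + v u_c²) = 0` with a positive bracket.
-/

theorem integral_Iic_of_hasDerivAt_of_tendsto_nhdsLT {f f' : ℝ → ℝ} {a l m : ℝ}
    (hl : Tendsto f (𝓝[<] a) (𝓝 l)) (hderiv : ∀ x < a, HasDerivAt f (f' x) x)
    (hint : IntegrableOn f' (Iic a)) (hm : Tendsto f atBot (𝓝 m)) :
    ∫ x in Iic a, f' x = l - m := by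
  classical
  have hcont : ContinuousWithinAt (Function.update f a l) (Iic a) a :=
    continuousWithinAt_update_same.2 (by rwa [Iic_sdiff_right])
  have h := integral_Iic_of_hasDerivAt_of_tendsto hcont (fun x (hx : x < a) => ?_) hint
    (hm.congr' ?_)
  · simpa using h
  · refine (hderiv x hx).congr_of_eventuallyEq ?_
    filter_upwards [Iio_mem_nhds hx] with y hy
    exact Function.update_of_ne hy.ne _ _
  · filter_upwards [Iio_mem_atBot a] with y hy
    exact (Function.update_of_ne hy.ne _ _).symm

theorem integral_Ioi_of_hasDerivAt_of_tendsto_nhdsGT {f f' : ℝ → ℝ} {a l m : ℝ}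
    (hl : Tendsto f (𝓝[>] a) (𝓝 l)) (hderiv : ∀ x > a, HasDerivAt f (f' x) x)
    (hint : IntegrableOn f' (Ioi a)) (hm : Tendsto f atTop (𝓝 m)) :
    ∫ x in Ioi a, f' x = m - l := by
  classical
  have hcont : ContinuousWithinAt (Function.update f a l) (Ici a) a :=
    continuousWithinAt_update_same.2 (by rwa [Ici_sdiff_left])
  have h := integral_Ioi_of_hasDerivAt_of_tendsto hcont (fun x (hx : a < x) => ?_) hint
    (hm.congr' ?_)
  · simpa using h
  · refine (hderiv x hx).congr_of_eventuallyEq ?_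
    filter_upwards [Ioi_mem_nhds hx] with y hy
    exact Function.update_of_ne hy.ne' _ _
  · filter_upwards [Ioi_mem_atTop a] with y hy
    exact (Function.update_of_ne hy.ne' _ _).symm

noncomputable def weightedWronskian (v : ℝ) (a a' z z' : ℝ → ℝ) (s : ℝ) : ℝ :=
  Real.exp (v * s) * (a' s * z s - a s * z' s)

theorem hasDerivAt_weightedWronskian (v q : ℝ) {a a' z z' : ℝ → ℝ} {a'' z'' x : ℝ}
    (ha : HasDerivAt a (a' x) x) (ha' : HasDerivAt a' a'' x)
    (hz : HasDerivAt z (z' x) x) (hz' : HasDerivAt z' z'' x) :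
    HasDerivAt (weightedWronskian v a a' z z') (Real.exp (v * x) *
      ((a'' + v * a' x + q * a x) * z x - a x * (z'' + v * z' x + q * z x))) x := by
  have h := ((hasDerivAt_id x).const_mul v).exp.mul ((ha'.mul hz).sub (ha.mul hz'))
  exact h.congr_deriv (by simp only [id_eq, Pi.sub_apply, Pi.mul_apply]; ring)

theorem tendsto_weightedWronskian {v x₀ α β : ℝ} {a a' z z' : ℝ → ℝ} {F : Filter ℝ}
    (hF : F ≤ 𝓝 x₀) (ha : ContinuousAt a x₀) (hz : ContinuousAt z x₀)
    (ha' : Tendsto a' F (𝓝 α)) (hz' : Tendsto z' F (𝓝 β)) :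
    Tendsto (weightedWronskian v a a' z z') F
      (𝓝 (Real.exp (v * x₀) * (α * z x₀ - a x₀ * β))) :=
  ((Real.continuous_exp.comp (continuous_const.mul continuous_id)).continuousAt.tendsto.mono_left
    hF).mul ((ha'.mul (hz.tendsto.mono_left hF)).sub ((ha.tendsto.mono_left hF).mul hz'))

theorem hasDerivAt_of_eqOn_exp_Ioi {F : ℝ → ℝ} {c v : ℝ}
    (hF : ∀ x, 0 < x → F x = c * Real.exp (-v * x)) {x : ℝ} (hx : 0 < x) :
    HasDerivAt F (-v * F x) x := by
  have h : HasDerivAt (fun s => c * Real.exp (-v * s)) (c * (Real.exp (-v * x) * -v)) x :=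
    (((hasDerivAt_id x).const_mul (-v)).exp.congr_deriv (by simp)).const_mul c
  rw [hF x hx]
  refine (h.congr_deriv (by ring)).congr_of_eventuallyEq ?_
  filter_upwards [Ioi_mem_nhds hx] with s hs
  exact hF s hs

section TravellingWave

variable {v u_c : ℝ} {f U U' U'' : ℝ → ℝ}

theorem travellingWave_deriv_of_pos (hU' : ∀ ξ, HasDerivAt U (U' ξ) ξ)
    (hR : ∀ ξ, 0 ≤ ξ → U ξ = u_c * Real.exp (-v * ξ)) {ξ : ℝ} (hξ : 0 < ξ) :
    U' ξ = -(v * u_c) * Real.exp (-v * ξ) := by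
  rw [(hU' ξ).unique (hasDerivAt_of_eqOn_exp_Ioi (fun x hx => hR x hx.le) hξ), hR ξ hξ.le]
  ring

theorem travellingWave_deriv_zero (hU' : ∀ ξ, HasDerivAt U (U' ξ) ξ) (hU'c : Continuous U')
    (hR : ∀ ξ, 0 ≤ ξ → U ξ = u_c * Real.exp (-v * ξ)) :
    U' 0 = -(v * u_c) := by
  have h : EqOn U' (fun ξ => -(v * u_c) * Real.exp (-v * ξ)) (Ioi 0) :=
    fun ξ hξ => travellingWave_deriv_of_pos hU' hR hξ
  simpa using h.closure hU'c (by fun_prop) (by simp : (0 : ℝ) ∈ closure (Ioi 0))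

theorem travellingWave_secondDeriv_of_pos (hU' : ∀ ξ, HasDerivAt U (U' ξ) ξ)
    (hU'' : ∀ ξ, ξ ≠ 0 → HasDerivAt U' (U'' ξ) ξ)
    (hR : ∀ ξ, 0 ≤ ξ → U ξ = u_c * Real.exp (-v * ξ)) {ξ : ℝ} (hξ : 0 < ξ) :
    U'' ξ = v * (v * u_c) * Real.exp (-v * ξ) := by
  rw [(hU'' ξ hξ.ne').unique (hasDerivAt_of_eqOn_exp_Ioi
    (fun x hx => travellingWave_deriv_of_pos hU' hR hx) hξ), travellingWave_deriv_of_pos hU' hR hξ]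
  ring

theorem hasDerivAt_travellingWave_secondDeriv_of_neg (hf : ContDiff ℝ 1 f)
    (hU' : ∀ ξ, HasDerivAt U (U' ξ) ξ) (hU'' : ∀ ξ, ξ ≠ 0 → HasDerivAt U' (U'' ξ) ξ)
    (hode : ∀ ξ, ξ < 0 → U'' ξ + v * U' ξ + f (U ξ) = 0) {ξ : ℝ} (hξ : ξ < 0) :
    HasDerivAt U'' (-(v * U'' ξ) - deriv f (U ξ) * U' ξ) ξ := by
  have hfU : HasDerivAt (fun s => f (U s)) (deriv f (U ξ) * U' ξ) ξ :=
    ((hf.differentiable one_ne_zero) (U ξ)).hasDerivAt.comp ξ (hU' ξ)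
  refine ((((hU'' ξ hξ.ne).const_mul v).neg).sub hfU).congr_of_eventuallyEq ?_
  filter_upwards [Iio_mem_nhds hξ] with s hs
  simp only [Pi.sub_apply, Pi.neg_apply]
  linarith [hode s hs]

theorem hasDerivAt_travellingWave_secondDeriv (hf : ContDiff ℝ 1 f)
    (hU' : ∀ ξ, HasDerivAt U (U' ξ) ξ) (hU'' : ∀ ξ, ξ ≠ 0 → HasDerivAt U' (U'' ξ) ξ)
    (hode : ∀ ξ, ξ < 0 → U'' ξ + v * U' ξ + f (U ξ) = 0)
    (hR : ∀ ξ, 0 ≤ ξ → U ξ = u_c * Real.exp (-v * ξ)) {ξ : ℝ} (hξ : ξ ≠ 0) :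
    HasDerivAt U'' (-(v * U'' ξ) - (if ξ < 0 then deriv f (U ξ) else 0) * U' ξ) ξ := by
  rcases hξ.lt_or_gt with hneg | hpos
  · simpa [hneg] using hasDerivAt_travellingWave_secondDeriv_of_neg hf hU' hU'' hode hneg
  · simpa [hpos.not_gt, neg_mul] using hasDerivAt_of_eqOn_exp_Ioi
      (fun x hx => travellingWave_secondDeriv_of_pos hU' hU'' hR hx) hpos

theorem travellingWave_secondDeriv_limit_left (hf : ContDiff ℝ 1 f)
    (hU' : ∀ ξ, HasDerivAt U (U' ξ) ξ) (hU'c : Continuous U')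
    (hode : ∀ ξ, ξ < 0 → U'' ξ + v * U' ξ + f (U ξ) = 0)
    (hR : ∀ ξ, 0 ≤ ξ → U ξ = u_c * Real.exp (-v * ξ)) {l : ℝ}
    (hl : Tendsto U'' (𝓝[<] 0) (𝓝 l)) :
    l = v * (v * u_c) - f u_c := by
  have hUc : Continuous U := continuous_iff_continuousAt.2 fun ξ => (hU' ξ).continuousAt
  have hlim : Tendsto (fun ξ => U'' ξ + v * U' ξ + f (U ξ)) (𝓝[<] 0)
      (𝓝 (l + v * U' 0 + f (U 0))) :=
    (hl.add ((hU'c.tendsto 0).const_mul v |>.mono_left nhdsWithin_le_nhds)).add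
      ((hf.continuous.comp hUc).tendsto 0 |>.mono_left nhdsWithin_le_nhds)
  have hzero : Tendsto (fun ξ => U'' ξ + v * U' ξ + f (U ξ)) (𝓝[<] 0) (𝓝 0) :=
    tendsto_const_nhds.congr' (eventually_nhdsWithin_of_forall fun ξ hξ => (hode ξ hξ).symm)
  have h := tendsto_nhds_unique hlim hzero
  rw [travellingWave_deriv_zero hU' hU'c hR, hR 0 le_rfl] at h
  simp only [mul_zero, Real.exp_zero, mul_one] at h
  linarith

theorem travellingWave_secondDeriv_limit_right (hU' : ∀ ξ, HasDerivAt U (U' ξ) ξ)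
    (hU'' : ∀ ξ, ξ ≠ 0 → HasDerivAt U' (U'' ξ) ξ)
    (hR : ∀ ξ, 0 ≤ ξ → U ξ = u_c * Real.exp (-v * ξ)) {l : ℝ}
    (hl : Tendsto U'' (𝓝[>] 0) (𝓝 l)) :
    l = v * (v * u_c) := by
  have hexp : Tendsto (fun ξ => v * (v * u_c) * Real.exp (-v * ξ)) (𝓝[>] 0)
      (𝓝 (v * (v * u_c) * Real.exp (-v * 0))) :=
    (Continuous.tendsto (by fun_prop) 0).mono_left nhdsWithin_le_nhds
  refine tendsto_nhds_unique hl (hexp.congr' ?_ |>.trans (by simp))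
  exact eventually_nhdsWithin_of_forall fun ξ hξ =>
    (travellingWave_secondDeriv_of_pos hU' hU'' hR hξ).symm

theorem travellingWave_integral_Ioi (hv : 0 < v) (hU' : ∀ ξ, HasDerivAt U (U' ξ) ξ)
    (hR : ∀ ξ, 0 ≤ ξ → U ξ = u_c * Real.exp (-v * ξ)) :
    IntegrableOn (fun s => U' s ^ 2 * Real.exp (v * s)) (Ioi 0) ∧
      ∫ s in Ioi 0, U' s ^ 2 * Real.exp (v * s) = v * u_c ^ 2 := by
  have heq : EqOn (fun s => (v * u_c) ^ 2 * Real.exp (-v * s))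
      (fun s => U' s ^ 2 * Real.exp (v * s)) (Ioi 0) := by
    intro s hs
    have hexp : Real.exp (-v * s) * Real.exp (v * s) = 1 := by
      rw [← Real.exp_add]; simp
    simp only [travellingWave_deriv_of_pos hU' hR hs]
    linear_combination (-((v * u_c) ^ 2 * Real.exp (-v * s))) * hexp
  refine ⟨IntegrableOn.congr_fun ((integrableOn_exp_mul_Ioi (neg_neg_of_pos hv) 0).const_mul _)
    heq measurableSet_Ioi, ?_⟩
  rw [← setIntegral_congr_fun measurableSet_Ioi heq, integral_const_mul,
    integral_exp_mul_Ioi (neg_neg_of_pos hv)]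
  field_simp
  simp

end TravellingWave

theorem stmt_13_general (v u_c v₁ : ℝ) (hv : 0 < v) (huc : u_c ∈ Ioo (0:ℝ) 1)
    (f : ℝ → ℝ) (hf : ContDiff ℝ 1 f)
    (U U' U'' : ℝ → ℝ)
    (hU' : ∀ ξ : ℝ, HasDerivAt U (U' ξ) ξ)
    (hU'c : Continuous U')
    (hU'' : ∀ ξ : ℝ, ξ ≠ 0 → HasDerivAt U' (U'' ξ) ξ)
    (hodeL : ∀ ξ : ℝ, ξ < 0 → U'' ξ + v * U' ξ + f (U ξ) = 0)
    (hR : ∀ ξ : ℝ, 0 ≤ ξ → U ξ = u_c * Real.exp (-v * ξ))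
    (hU''lim : ∃ l₁ l₂ : ℝ, Tendsto U'' (nhdsWithin 0 (Iio 0)) (nhds l₁) ∧
      Tendsto U'' (nhdsWithin 0 (Ioi 0)) (nhds l₂))
    (hint : IntegrableOn (fun s => (U' s)^2 * Real.exp (v * s)) (Iic 0))
    (a a' a'' : ℝ → ℝ)
    (hac : Continuous a)
    (ha' : ∀ ξ : ℝ, ξ ≠ 0 → HasDerivAt a (a' ξ) ξ)
    (ha'' : ∀ ξ : ℝ, ξ ≠ 0 → HasDerivAt a' (a'' ξ) ξ)
    (ap am : ℝ)
    (hap : Tendsto a' (nhdsWithin 0 (Ioi 0)) (nhds ap))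
    (ham : Tendsto a' (nhdsWithin 0 (Iio 0)) (nhds am))
    (haode : ∀ ξ : ℝ, ξ ≠ 0 →
      a'' ξ + v * a' ξ + (if ξ < 0 then deriv f (U ξ) else 0) * a ξ = -v₁ * U' ξ)
    (hjump : ap - am = -f u_c * (v * u_c)⁻¹ * a 0)
    (hfluxT : Tendsto (fun ξ => Real.exp (v*ξ) * (a' ξ * U' ξ - a ξ * U'' ξ))
      atTop (nhds 0))
    (hfluxB : Tendsto (fun ξ => Real.exp (v*ξ) * (a' ξ * U' ξ - a ξ * U'' ξ))
      atBot (nhds 0)) :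
    v₁ = 0 := by
  obtain ⟨huc0, -⟩ := huc
  obtain ⟨l₁, l₂, hl₁, hl₂⟩ := hU''lim
  have hW : ∀ ξ, ξ ≠ 0 → HasDerivAt (weightedWronskian v a a' U' U'')
      (-v₁ * (U' ξ ^ 2 * Real.exp (v * ξ))) ξ := fun ξ hξ =>
    (hasDerivAt_weightedWronskian v (if ξ < 0 then deriv f (U ξ) else 0) (ha' ξ hξ) (ha'' ξ hξ)
      (hU'' ξ hξ) (hasDerivAt_travellingWave_secondDeriv hf hU' hU'' hodeL hR hξ)).congr_deriv
      (by rw [haode ξ hξ]; ring)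
  obtain ⟨hintR, hJ⟩ := travellingWave_integral_Ioi hv hU' hR
  have hleft := integral_Iic_of_hasDerivAt_of_tendsto_nhdsLT
    (tendsto_weightedWronskian nhdsWithin_le_nhds hac.continuousAt hU'c.continuousAt ham hl₁)
    (fun ξ hξ => hW ξ hξ.ne) (hint.const_mul (-v₁)) hfluxB
  have hright := integral_Ioi_of_hasDerivAt_of_tendsto_nhdsGT
    (tendsto_weightedWronskian nhdsWithin_le_nhds hac.continuousAt hU'c.continuousAt hap hl₂)
    (fun ξ hξ => hW ξ hξ.ne') (hintR.const_mul (-v₁)) hfluxT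
  rw [integral_const_mul, travellingWave_deriv_zero hU' hU'c hR,
    travellingWave_secondDeriv_limit_left hf hU' hU'c hodeL hR hl₁] at hleft
  rw [integral_const_mul, hJ, travellingWave_deriv_zero hU' hU'c hR,
    travellingWave_secondDeriv_limit_right hU' hU'' hR hl₂] at hright
  simp only [mul_zero, Real.exp_zero, one_mul] at hleft hright
  have hinv : (v * u_c) * (v * u_c)⁻¹ = 1 := mul_inv_cancel₀ (by positivity)
  have hI : 0 ≤ ∫ s in Iic 0, U' s ^ 2 * Real.exp (v * s) :=
    setIntegral_nonneg measurableSet_Iic fun s _ => by positivity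
  have key : v₁ * ((∫ s in Iic 0, U' s ^ 2 * Real.exp (v * s)) + v * u_c ^ 2) = 0 := by
    linear_combination -hleft - hright - (v * u_c) * hjump + f u_c * a 0 * hinv
  exact (mul_eq_zero.1 key).resolve_right (by positivity)

/-- Solvability condition for the mean mode of the first-order correction to the cut-off
KPP travelling wave `U` (speed `v`, cut-off `u_c`): if `a` solves
`a'' + va' + 1_{ξ<0} f'(U)a = −v₁U'` away from `0`, with the interface jump
`a'(0⁺) − a'(0⁻) = −f(u_c)(vu_c)⁻¹ a(0)` and vanishing flux
`e^{vξ}(a'U' − aU'') → 0` at `±∞`, then `v₁ = 0`. -/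
theorem stmt_13 (v u_c v₁ : ℝ) (hv : 0 < v) (huc : u_c ∈ Ioo (0:ℝ) 1)
    (f : ℝ → ℝ) (hf : ContDiff ℝ 1 f)
    (U U' U'' : ℝ → ℝ)
    (hU' : ∀ ξ : ℝ, HasDerivAt U (U' ξ) ξ)
    (hU'c : Continuous U')
    (hU'' : ∀ ξ : ℝ, ξ ≠ 0 → HasDerivAt U' (U'' ξ) ξ)
    (hU''c : ContinuousOn U'' {(0:ℝ)}ᶜ)
    (hodeL : ∀ ξ : ℝ, ξ < 0 → U'' ξ + v * U' ξ + f (U ξ) = 0)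
    (hR : ∀ ξ : ℝ, 0 ≤ ξ → U ξ = u_c * Real.exp (-v * ξ))
    (hU''lim : ∃ l₁ l₂ : ℝ, Tendsto U'' (nhdsWithin 0 (Iio 0)) (nhds l₁) ∧
      Tendsto U'' (nhdsWithin 0 (Ioi 0)) (nhds l₂))
    (hint : IntegrableOn (fun s => (U' s)^2 * Real.exp (v * s)) (Iic 0))
    (a a' a'' : ℝ → ℝ)
    (hac : Continuous a)
    (ha' : ∀ ξ : ℝ, ξ ≠ 0 → HasDerivAt a (a' ξ) ξ)
    (ha'' : ∀ ξ : ℝ, ξ ≠ 0 → HasDerivAt a' (a'' ξ) ξ)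
    (ha''c : ContinuousOn a'' {(0:ℝ)}ᶜ)
    (ap am : ℝ)
    (hap : Tendsto a' (nhdsWithin 0 (Ioi 0)) (nhds ap))
    (ham : Tendsto a' (nhdsWithin 0 (Iio 0)) (nhds am))
    (haode : ∀ ξ : ℝ, ξ ≠ 0 →
      a'' ξ + v * a' ξ + (if ξ < 0 then deriv f (U ξ) else 0) * a ξ = -v₁ * U' ξ)
    (hjump : ap - am = -f u_c * (v * u_c)⁻¹ * a 0)
    (hfluxT : Tendsto (fun ξ => Real.exp (v*ξ) * (a' ξ * U' ξ - a ξ * U'' ξ))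
      atTop (nhds 0))
    (hfluxB : Tendsto (fun ξ => Real.exp (v*ξ) * (a' ξ * U' ξ - a ξ * U'' ξ))
      atBot (nhds 0)) :
    v₁ = 0 :=
  stmt_13_general v u_c v₁ hv huc f hf U U' U'' hU' hU'c hU'' hodeL hR hU''lim hint a a' a'' hac ha'
    ha'' ap am hap ham haode hjump hfluxT hfluxB
end

section
/- Let y_M ∈ (0,1), c ∈ ℝ, and let ψ : [0,1] → ℝ be continuously differentiable with 0 < ψ(y) ≤ 1 for all y ∈ [0,1]. Define z₀ : [0,1] → ℝ by z₀(y) = ψ(y)^{−1}·( c + ∫_0^y (1 − ψ(s)²)^{1/2} ds ) for 0 ≤ y ≤ y_M, and z₀(y) = ψ(y)^{−1}·( c + ∫_0^{y_M} (1 − ψ(s)²)^{1/2} ds − ∫_{y_M}^y (1 − ψ(s)²)^{1/2} ds ) for y_M ≤ y ≤ 1. Then z₀ is continuous on [0,1], differentiable at every y ∈ (0,1)∖{y_M}, and at every such y satisfies the eikonal relation ψ(y)²·(1 + z₀'(y)²) + 2·z₀(y)·z₀'(y)·ψ(y)·ψ'(y) + z₀(y)²·ψ'(y)² = 1. -/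
/-!
Since `ψ z₀` is `c` plus a signed primitive of `√(1 - ψ²)`, its derivative `ψ' z₀ + ψ z₀'`
squares to `1 - ψ²`; expanding that square is exactly the eikonal relation.
-/

open Set MeasureTheory Filter Topology intervalIntegral

section Primitive

variable {E : Type*} [NormedAddCommGroup E] [NormedSpace ℝ E] {f : ℝ → E} {a b u y : ℝ}

lemma ContinuousOn.continuousOn_primitive_Icc (hf : ContinuousOn f (Icc a b)) (hu : u ∈ Icc a b) :
    ContinuousOn (fun x => ∫ t in u..x, f t) (Icc a b) := by
  have hab : a ≤ b := hu.1.trans hu.2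
  simpa only [uIcc_of_le hab] using
    continuousOn_primitive_interval' (hf.intervalIntegrable_of_Icc hab) (by rwa [uIcc_of_le hab])

lemma ContinuousOn.hasDerivAt_primitive_of_mem_Ioo [CompleteSpace E]
    (hf : ContinuousOn f (Icc a b)) (hu : u ∈ Icc a b) (hy : y ∈ Ioo a b) :
    HasDerivAt (fun x => ∫ t in u..x, f t) (f y) y := by
  have hIcc : Icc a b ∈ 𝓝 y := Icc_mem_nhds hy.1 hy.2
  exact integral_hasDerivAt_right
    ((hf.mono (uIcc_subset_Icc hu (Ioo_subset_Icc_self hy))).intervalIntegrable)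
    ⟨Icc a b, hIcc, hf.aestronglyMeasurable measurableSet_Icc⟩ (hf.continuousAt hIcc)

end Primitive

lemma ContinuousOn.of_eqOn_Icc_left_right {α β : Type*} [LinearOrder α] [TopologicalSpace α]
    [OrderClosedTopology α] [TopologicalSpace β] {f g h : α → β} {a m b : α} (hm : m ∈ Icc a b)
    (hg : ContinuousOn g (Icc a b)) (hh : ContinuousOn h (Icc a b))
    (hfg : EqOn f g (Icc a m)) (hfh : EqOn f h (Icc m b)) : ContinuousOn f (Icc a b) := by
  rw [← Icc_union_Icc_eq_Icc hm.1 hm.2]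
  exact ((hg.mono (Icc_subset_Icc_right hm.2)).congr hfg).union_of_isClosed
    ((hh.mono (Icc_subset_Icc_left hm.1)).congr hfh) isClosed_Icc isClosed_Icc

lemma exists_hasDerivAt_eikonal_of_eventuallyEq_inv_mul {ψ z F : ℝ → ℝ} {y ψ' F' : ℝ}
    (hψ : HasDerivAt ψ ψ' y) (hψ0 : ψ y ≠ 0) (hF : HasDerivAt F F' y)
    (hF' : F' ^ 2 = 1 - ψ y ^ 2) (hz : z =ᶠ[𝓝 y] fun x => (ψ x)⁻¹ * F x) :
    ∃ d : ℝ, HasDerivAt z d y ∧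
      ψ y ^ 2 * (1 + d ^ 2) + 2 * z y * d * ψ y * ψ' + z y ^ 2 * ψ' ^ 2 = 1 := by
  refine ⟨_, ((hψ.inv hψ0).mul hF).congr_of_eventuallyEq hz, ?_⟩
  have hzy : z y = (ψ y)⁻¹ * F y := hz.self_of_nhds
  have product_rule : ψ y * (-ψ' / ψ y ^ 2 * F y + (ψ y)⁻¹ * F') + z y * ψ' = F' := by
    rw [hzy]
    field_simp
    ring
  linear_combination (congrArg (· ^ 2) product_rule).trans hF'

theorem stmt_18_general (y_M c : ℝ) (hyM : y_M ∈ Ioo (0:ℝ) 1)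
    (ψ ψ' : ℝ → ℝ)
    (hψ' : ∀ y ∈ Icc (0:ℝ) 1, HasDerivWithinAt ψ (ψ' y) (Icc 0 1) y)
    (hψb : ∀ y ∈ Icc (0:ℝ) 1, 0 < ψ y ∧ ψ y ≤ 1)
    (z₀ : ℝ → ℝ)
    (hz₀L : ∀ y : ℝ, y ≤ y_M →
      z₀ y = (ψ y)⁻¹ * (c + ∫ s in (0:ℝ)..y, Real.sqrt (1 - ψ s^2)))
    (hz₀R : ∀ y : ℝ, y_M ≤ y →
      z₀ y = (ψ y)⁻¹ * (c + (∫ s in (0:ℝ)..y_M, Real.sqrt (1 - ψ s^2))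
        - ∫ s in y_M..y, Real.sqrt (1 - ψ s^2))) :
    ContinuousOn z₀ (Icc 0 1) ∧
    ∀ y ∈ Ioo (0:ℝ) 1, y ≠ y_M → ∃ d : ℝ, HasDerivAt z₀ d y ∧
      ψ y^2 * (1 + d^2) + 2 * z₀ y * d * ψ y * ψ' y + (z₀ y)^2 * (ψ' y)^2 = 1 := by
  set g : ℝ → ℝ := fun s => Real.sqrt (1 - ψ s ^ 2)
  have hyM' : y_M ∈ Icc (0:ℝ) 1 := Ioo_subset_Icc_self hyM
  have h0 : (0:ℝ) ∈ Icc (0:ℝ) 1 := left_mem_Icc.2 zero_le_one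
  have hψc : ContinuousOn ψ (Icc 0 1) := fun y hy => (hψ' y hy).continuousWithinAt
  have hψinv : ContinuousOn (fun x => (ψ x)⁻¹) (Icc 0 1) :=
    hψc.inv₀ fun y hy => (hψb y hy).1.ne'
  have hg : ContinuousOn g (Icc 0 1) := (continuousOn_const.sub (hψc.pow 2)).sqrt
  refine ⟨ContinuousOn.of_eqOn_Icc_left_right hyM'
    (hψinv.mul (continuousOn_const.add (hg.continuousOn_primitive_Icc h0)))
    (hψinv.mul (continuousOn_const.sub (hg.continuousOn_primitive_Icc hyM')))
    (fun y hy => hz₀L y hy.2) (fun y hy => hz₀R y hy.1), fun y hy hne => ?_⟩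
  have hψy : HasDerivAt ψ (ψ' y) y := (hψ' y (Ioo_subset_Icc_self hy)).hasDerivAt
    (Icc_mem_nhds hy.1 hy.2)
  have hψ0 : ψ y ≠ 0 := (hψb y (Ioo_subset_Icc_self hy)).1.ne'
  have hgy : g y ^ 2 = 1 - ψ y ^ 2 :=
    Real.sq_sqrt (by nlinarith [hψb y (Ioo_subset_Icc_self hy)])
  rcases hne.lt_or_gt with hlt | hgt
  · exact exists_hasDerivAt_eikonal_of_eventuallyEq_inv_mul hψy hψ0
      ((hg.hasDerivAt_primitive_of_mem_Ioo h0 hy).const_add c) hgy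
      (eventually_of_mem (Iio_mem_nhds hlt) fun x hx => hz₀L x hx.le)
  · exact exists_hasDerivAt_eikonal_of_eventuallyEq_inv_mul hψy hψ0
      ((hg.hasDerivAt_primitive_of_mem_Ioo hyM' hy).const_sub _) (by rwa [neg_sq])
      (eventually_of_mem (Ioi_mem_nhds hgt) fun x hx => hz₀R x hx.le)

/-- The explicit quadrature for the thin-front interface: with `0 < ψ ≤ 1` continuously
differentiable on `[0,1]` and `z₀` defined piecewise by
`z₀(y) = ψ(y)⁻¹(c + ∫_0^y √(1−ψ²))` for `y ≤ y_M` and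
`z₀(y) = ψ(y)⁻¹(c + ∫_0^{y_M} √(1−ψ²) − ∫_{y_M}^y √(1−ψ²))` for `y ≥ y_M`,
`z₀` is continuous on `[0,1]`, differentiable on `(0,1)∖{y_M}`, and satisfies the
eikonal relation `ψ²(1 + z₀'²) + 2z₀z₀'ψψ' + z₀²ψ'² = 1` there. -/
theorem stmt_18 (y_M c : ℝ) (hyM : y_M ∈ Ioo (0:ℝ) 1)
    (ψ ψ' : ℝ → ℝ)
    (hψ' : ∀ y ∈ Icc (0:ℝ) 1, HasDerivWithinAt ψ (ψ' y) (Icc 0 1) y)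
    (hψ'c : ContinuousOn ψ' (Icc 0 1))
    (hψb : ∀ y ∈ Icc (0:ℝ) 1, 0 < ψ y ∧ ψ y ≤ 1)
    (z₀ : ℝ → ℝ)
    (hz₀L : ∀ y : ℝ, y ≤ y_M →
      z₀ y = (ψ y)⁻¹ * (c + ∫ s in (0:ℝ)..y, Real.sqrt (1 - ψ s^2)))
    (hz₀R : ∀ y : ℝ, y_M ≤ y →
      z₀ y = (ψ y)⁻¹ * (c + (∫ s in (0:ℝ)..y_M, Real.sqrt (1 - ψ s^2))
        - ∫ s in y_M..y, Real.sqrt (1 - ψ s^2))) :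
    ContinuousOn z₀ (Icc 0 1) ∧
    ∀ y ∈ Ioo (0:ℝ) 1, y ≠ y_M → ∃ d : ℝ, HasDerivAt z₀ d y ∧
      ψ y^2 * (1 + d^2) + 2 * z₀ y * d * ψ y * ψ' y + (z₀ y)^2 * (ψ' y)^2 = 1 :=
  stmt_18_general y_M c hyM ψ ψ' hψ' hψb z₀ hz₀L hz₀R
end
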